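/- arXiv:2110.02554 — 4 statements merged into one kernel-verified Lean document; each statement's English description precedes it below -/
import Mathlib

section
/- Fix a matrix γ' ∈ ℝ^{n₁×n₂} with all entries strictly positive, and define KL(γ‖γ') = Σ_{i,j} γ(i,j) · log(γ(i,j)/γ'(i,j)). Then KL(·‖γ') is 1-strongly convex with respect to the Frobenius norm on the convex set S = {γ ∈ ℝ^{n₁×n₂} : 0 < γ(i,j) ≤ 1 for all i, j}. -/
open Set Real

/-- Auxiliary: for `c > 0`, `x ↦ x log(x/c) - x²/2` is convex on `(0, 1]`. -/
lemma aux_convexOn (c : ℝ) (hc : 0 < c) :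
    ConvexOn ℝ (Set.Ioc (0:ℝ) 1)
      (fun x => x * Real.log (x / c) - (1/2 : ℝ) * x ^ 2) := by
  have hint : interior (Set.Ioc (0:ℝ) 1) = Set.Ioo (0:ℝ) 1 := interior_Ioc
  refine convexOn_of_hasDerivWithinAt2_nonneg (f' := fun x => Real.log (x/c) + 1 - x)
    (f'' := fun x => 1 / x - 1) (convex_Ioc 0 1) ?_ ?_ ?_ ?_
  · have : ContinuousOn (fun x : ℝ => Real.log (x / c)) (Set.Ioc (0:ℝ) 1) := by
      apply ContinuousOn.log
      · exact (continuousOn_id.div_const c)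
      · intro x hx
        exact div_ne_zero (ne_of_gt hx.1) (ne_of_gt hc)
    exact (continuousOn_id.mul this).sub
      ((continuousOn_const).mul (continuousOn_pow 2))
  · rw [hint]
    intro x hx
    have hx0 : x ≠ 0 := ne_of_gt hx.1
    have h1 : HasDerivAt (fun x : ℝ => Real.log (x / c)) (1 / x) x := by
      have := (Real.hasDerivAt_log (div_ne_zero hx0 hc.ne')).comp x
        ((hasDerivAt_id x).div_const c)
      refine this.congr_deriv ?_
      field_simp
    have h2 : HasDerivAt (fun x : ℝ => x * Real.log (x / c))
        (1 * Real.log (x / c) + x * (1 / x)) x := (hasDerivAt_id x).mul h1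
    have h3 : HasDerivAt (fun x : ℝ => (1/2 : ℝ) * x ^ 2) ((1/2 : ℝ) * (2 * x ^ 1)) x :=
      (hasDerivAt_pow 2 x).const_mul _
    have := (h2.sub h3).hasDerivWithinAt (s := Set.Ioo (0:ℝ) 1)
    refine this.congr_deriv ?_
    field_simp
  · rw [hint]
    intro x hx
    have hx0 : x ≠ 0 := ne_of_gt hx.1
    have h1 : HasDerivAt (fun x : ℝ => Real.log (x / c)) (1 / x) x := by
      have := (Real.hasDerivAt_log (div_ne_zero hx0 hc.ne')).comp x
        ((hasDerivAt_id x).div_const c)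
      refine this.congr_deriv ?_
      field_simp
    have := ((h1.add_const 1).sub (hasDerivAt_id x)).hasDerivWithinAt
      (s := Set.Ioo (0:ℝ) 1)
    exact this
  · rw [hint]
    intro x hx
    have h1 : 1 ≤ 1 / x := one_le_one_div hx.1 hx.2.le
    linarith

/-- Lemma 2: for a fixed entrywise-positive `γ'`, the KL divergence
`KL(γ‖γ') = ∑_{i,j} γ(i,j) log(γ(i,j)/γ'(i,j))` is `1`-strongly convex with
respect to the Frobenius norm on `S = {γ : 0 < γ(i,j) ≤ 1 for all i, j}`,
i.e. `KL(·‖γ') − (1/2)‖·‖_F²` is convex on `S`. -/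
theorem kl_divergence_strongly_convex {n₁ n₂ : ℕ}
    (γ' : Matrix (Fin n₁) (Fin n₂) ℝ) (hγ' : ∀ i j, 0 < γ' i j) :
    ConvexOn ℝ
      {γ : Matrix (Fin n₁) (Fin n₂) ℝ | ∀ i j, 0 < γ i j ∧ γ i j ≤ 1}
      (fun γ =>
        (∑ i, ∑ j, γ i j * Real.log (γ i j / γ' i j))
          - (1 / 2 : ℝ) * ∑ i, ∑ j, (γ i j) ^ 2) := by
  set S : Set (Matrix (Fin n₁) (Fin n₂) ℝ) :=
    {γ | ∀ i j, 0 < γ i j ∧ γ i j ≤ 1} with hS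
  have hSconv : Convex ℝ S := by
    intro x hx y hy a b ha hb hab
    intro i j
    have hmem : a * x i j + b * y i j ∈ Set.Ioc (0:ℝ) 1 :=
      (convex_Ioc (0:ℝ) 1) ⟨(hx i j).1, (hx i j).2⟩ ⟨(hy i j).1, (hy i j).2⟩ ha hb hab
    simpa [Matrix.add_apply, Matrix.smul_apply, smul_eq_mul] using
      (⟨hmem.1, hmem.2⟩ : 0 < a * x i j + b * y i j ∧ a * x i j + b * y i j ≤ 1)
  -- rewrite the function as a sum of per-entry convex functions
  have hfun : ∀ γ : Matrix (Fin n₁) (Fin n₂) ℝ,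
      (∑ i, ∑ j, γ i j * Real.log (γ i j / γ' i j))
          - (1 / 2 : ℝ) * ∑ i, ∑ j, (γ i j) ^ 2
      = ∑ i, ∑ j, (γ i j * Real.log (γ i j / γ' i j) - (1/2 : ℝ) * (γ i j) ^ 2) := by
    intro γ
    rw [Finset.mul_sum, ← Finset.sum_sub_distrib]
    refine Finset.sum_congr rfl fun i _ => ?_
    rw [Finset.mul_sum, ← Finset.sum_sub_distrib]
  have key : ConvexOn ℝ S
      (fun γ => ∑ i, ∑ j, (γ i j * Real.log (γ i j / γ' i j)
        - (1/2 : ℝ) * (γ i j) ^ 2)) := by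
    refine ⟨hSconv, fun x hx y hy a b ha hb hab => ?_⟩
    simp only [smul_eq_mul, Matrix.add_apply, Matrix.smul_apply]
    rw [Finset.mul_sum, Finset.mul_sum, ← Finset.sum_add_distrib]
    refine Finset.sum_le_sum fun i _ => ?_
    rw [Finset.mul_sum, Finset.mul_sum, ← Finset.sum_add_distrib]
    refine Finset.sum_le_sum fun j _ => ?_
    have := (aux_convexOn (γ' i j) (hγ' i j)).2
      (x := x i j) (y := y i j) ⟨(hx i j).1, (hx i j).2⟩ ⟨(hy i j).1, (hy i j).2⟩ ha hb hab
    simpa [smul_eq_mul] using this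
  exact (key.congr (fun γ _ => (hfun γ).symm))
end

section
/- Let V be a finite-dimensional real inner product space, S ⊆ V a convex set, φ : V → ℝ differentiable with L-Lipschitz gradient (L > 0), and h : V → ℝ differentiable and σ-strongly convex on S with 0 < σ < L. Set H = φ − h. Then for all γ, γ̂ ∈ S and all α ∈ [0,1], writing γ̄ = γ + α(γ̂ − γ), one has H(γ̄) − H(γ) − ⟨γ̄ − γ, ∇H(γ)⟩ ≤ (α²/2)(L − σ)‖γ̂ − γ‖². Consequently, the generalized curvature constant C_{φ−h} = sup{ (2/α²)(H(γ̄) − H(γ) − ⟨γ̄ − γ, ∇H(γ)⟩) : γ, γ̂ ∈ S, α ∈ (0,1], γ̄ = γ + α(γ̂ − γ) } satisfies C_{φ−h} ≤ (L − σ) · diam(S)², where diam(S) = sup{‖x − y‖ : x, y ∈ S}. -/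
open RealInnerProductSpace

section Helpers

variable {V : Type*} [NormedAddCommGroup V] [InnerProductSpace ℝ V] [CompleteSpace V]

lemma fderiv_eq_inner_gradient (f : V → ℝ) (z v : V) :
    fderiv ℝ f z v = ⟪gradient f z, v⟫ := by
  have hz : gradient f z = (InnerProductSpace.toDual ℝ V).symm (fderiv ℝ f z) := rfl
  rw [hz, ← InnerProductSpace.toDual_apply_apply, LinearIsometryEquiv.apply_symm_apply]

lemma line_hasDerivAt (x v : V) (t : ℝ) :
    HasDerivAt (fun s : ℝ => x + s • v) v t := by
  simpa using ((hasDerivAt_id t).smul_const v).const_add x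

/-- Tangent line inequality for a convex differentiable function. -/
lemma convex_tangent_le {S : Set V} {c : V → ℝ} (hc : ConvexOn ℝ S c)
    (hcd : Differentiable ℝ c) {x y : V} (hx : x ∈ S) (hy : y ∈ S) :
    c x + fderiv ℝ c x (y - x) ≤ c y := by
  set u : ℝ → ℝ := fun t => c (x + t • (y - x)) with hu
  have hder : HasDerivAt u (fderiv ℝ c x (y - x)) 0 := by
    have := (hcd (x + (0:ℝ) • (y-x))).hasFDerivAt.comp_hasDerivAt 0
      (line_hasDerivAt x (y - x) 0)
    simp only [zero_smul, add_zero] at this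
    exact this
  have hslope : Filter.Tendsto (slope u 0) (nhdsWithin 0 (Set.Ioi 0))
      (nhds (fderiv ℝ c x (y - x))) :=
    (hasDerivAt_iff_tendsto_slope.mp hder).mono_left
      (nhdsWithin_mono _ (fun t ht => Set.mem_compl_singleton_iff.mpr (ne_of_gt ht)))
  have hbound : ∀ᶠ t in nhdsWithin (0:ℝ) (Set.Ioi 0), slope u 0 t ≤ c y - c x := by
    filter_upwards [Ioc_mem_nhdsGT_of_mem (Set.left_mem_Ico.mpr zero_lt_one)]
      with t ht
    have h1 : x + t • (y - x) = (1 - t) • x + t • y := by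
      rw [smul_sub, sub_smul, one_smul]; abel
    have h2 : u t ≤ (1 - t) * c x + t * c y := by
      rw [hu]; simp only [h1]
      exact hc.2 hx hy (by linarith [ht.2]) (le_of_lt ht.1) (by ring)
    have h0 : u 0 = c x := by simp [hu]
    rw [slope_def_field, sub_zero, div_le_iff₀ ht.1, h0]
    nlinarith [ht.1, ht.2]
  have := le_of_tendsto hslope hbound
  linarith

/-- Descent lemma for a function with L-Lipschitz gradient. -/
lemma descent_lemma {f : V → ℝ} {L : ℝ} (hf : Differentiable ℝ f)
    (hlip : ∀ a b : V, ‖gradient f a - gradient f b‖ ≤ L * ‖a - b‖)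
    (x y : V) :
    f y - f x - ⟪gradient f x, y - x⟫ ≤ L / 2 * ‖y - x‖ ^ 2 := by
  set v := y - x with hv
  set q : ℝ → ℝ := fun t =>
    f (x + t • v) - t * ⟪gradient f x, v⟫ - L / 2 * t ^ 2 * ‖v‖ ^ 2 with hq
  have hqd : ∀ t : ℝ, HasDerivAt q
      (fderiv ℝ f (x + t • v) v - ⟪gradient f x, v⟫ - L * t * ‖v‖ ^ 2) t := by
    intro t
    have h1 : HasDerivAt (fun s : ℝ => f (x + s • v)) (fderiv ℝ f (x + t • v) v) t :=
      (hf (x + t • v)).hasFDerivAt.comp_hasDerivAt t (line_hasDerivAt x v t)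
    have h2 : HasDerivAt (fun s : ℝ => s * ⟪gradient f x, v⟫)
        (⟪gradient f x, v⟫) t := by
      simpa using (hasDerivAt_id t).mul_const (⟪gradient f x, v⟫ : ℝ)
    have h3 : HasDerivAt (fun s : ℝ => L / 2 * s ^ 2 * ‖v‖ ^ 2)
        (L * t * ‖v‖ ^ 2) t := by
      have := ((hasDerivAt_pow 2 t).const_mul (L / 2)).mul_const (‖v‖ ^ 2)
      refine this.congr_deriv ?_
      rw [show (2:ℕ) - 1 = 1 from rfl]; push_cast; ring
    exact (h1.sub h2).sub h3
  have hmono : AntitoneOn q (Set.Icc 0 1) := by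
    apply antitoneOn_of_deriv_nonpos (convex_Icc 0 1)
    · exact fun t _ => ((hqd t).differentiableAt).continuousAt.continuousWithinAt
    · exact fun t _ => ((hqd t).differentiableAt).differentiableWithinAt
    · intro t ht
      rw [interior_Icc] at ht
      rw [(hqd t).deriv]
      have key : fderiv ℝ f (x + t • v) v - ⟪gradient f x, v⟫ ≤ L * t * ‖v‖ ^ 2 := by
        rw [fderiv_eq_inner_gradient]
        have h1 : (⟪gradient f (x + t • v), v⟫ : ℝ) - ⟪gradient f x, v⟫
            = ⟪gradient f (x + t • v) - gradient f x, v⟫ := by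
          rw [inner_sub_left]
        rw [h1]
        calc (⟪gradient f (x + t • v) - gradient f x, v⟫ : ℝ)
            ≤ ‖gradient f (x + t • v) - gradient f x‖ * ‖v‖ :=
              real_inner_le_norm _ _
          _ ≤ L * ‖(x + t • v) - x‖ * ‖v‖ := by
              apply mul_le_mul_of_nonneg_right (hlip _ _) (norm_nonneg _)
          _ = L * t * ‖v‖ ^ 2 := by
              rw [add_sub_cancel_left, norm_smul, Real.norm_eq_abs,
                abs_of_pos ht.1]
              ring
      linarith
  have := hmono (Set.left_mem_Icc.mpr zero_le_one)
    (Set.right_mem_Icc.mpr zero_le_one) zero_le_one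
  have h0 : q 0 = f x := by simp [hq]
  have h1 : q 1 = f y - ⟪gradient f x, v⟫ - L / 2 * ‖v‖ ^ 2 := by
    simp [hq, hv]
  rw [h0, h1] at this
  linarith

end Helpers

section Main

variable {V : Type*} [NormedAddCommGroup V] [InnerProductSpace ℝ V] [CompleteSpace V]

lemma fderiv_normsq_apply (γ w : V) :
    fderiv ℝ (fun x : V => ‖x‖ ^ 2) γ w = 2 * ⟪γ, w⟫ := by
  have h1 := (hasFDerivAt_id γ).inner ℝ (hasFDerivAt_id γ)
  have h2 : (fun x : V => (⟪x, x⟫ : ℝ)) = fun x : V => ‖x‖ ^ 2 :=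
    funext fun x => real_inner_self_eq_norm_sq x
  rw [← h2]
  simp only [id] at h1
  rw [h1.fderiv]
  simp [real_inner_comm]
  ring

end Main

/-- Curvature bound for `H = φ − h` where `φ` has an `L`-Lipschitz gradient and
`h` is `σ`-strongly convex on a convex bounded set `S` (with `0 < σ < L`):
for all `γ, γ' ∈ S` and `α ∈ [0,1]`, writing `γ̄ = γ + α(γ' − γ)`,
`H(γ̄) − H(γ) − ⟪γ̄ − γ, ∇H(γ)⟫ ≤ (α²/2)(L − σ)‖γ' − γ‖²`; consequently the
generalized curvature constant satisfies `C_{φ−h} ≤ (L − σ) diam(S)²`. -/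
theorem generalized_curvature_bound {V : Type*} [NormedAddCommGroup V]
    [InnerProductSpace ℝ V] [FiniteDimensional ℝ V]
    (S : Set V) (hSconv : Convex ℝ S) (hSbdd : Bornology.IsBounded S)
    (φ h : V → ℝ) (L σ : ℝ) (hσ : 0 < σ) (hσL : σ < L)
    (hφdiff : Differentiable ℝ φ)
    (hφlip : ∀ x y : V, ‖gradient φ x - gradient φ y‖ ≤ L * ‖x - y‖)
    (hhdiff : Differentiable ℝ h)
    (hhsc : ConvexOn ℝ S (fun x => h x - σ / 2 * ‖x‖ ^ 2))
    (H : V → ℝ) (hH : H = fun x => φ x - h x) :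
    (∀ γ ∈ S, ∀ γ' ∈ S, ∀ α ∈ Set.Icc (0 : ℝ) 1,
        H (γ + α • (γ' - γ)) - H γ - ⟪γ + α • (γ' - γ) - γ, gradient H γ⟫
          ≤ α ^ 2 / 2 * (L - σ) * ‖γ' - γ‖ ^ 2) ∧
      (∀ γ ∈ S, ∀ γ' ∈ S, ∀ α ∈ Set.Ioc (0 : ℝ) 1,
        2 / α ^ 2 *
            (H (γ + α • (γ' - γ)) - H γ - ⟪γ + α • (γ' - γ) - γ, gradient H γ⟫)
          ≤ (L - σ) * Metric.diam S ^ 2) := by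
  have key : ∀ γ ∈ S, ∀ γ' ∈ S, ∀ α ∈ Set.Icc (0 : ℝ) 1,
      H (γ + α • (γ' - γ)) - H γ - ⟪γ + α • (γ' - γ) - γ, gradient H γ⟫
        ≤ α ^ 2 / 2 * (L - σ) * ‖γ' - γ‖ ^ 2 := by
    intro γ hγ γ' hγ' α hα
    set γb := γ + α • (γ' - γ) with hγbdef
    have hsub : γb - γ = α • (γ' - γ) := add_sub_cancel_left γ _
    have hγbS : γb ∈ S := by
      have heq : γb = (1 - α) • γ + α • γ' := by
        rw [hγbdef, smul_sub, sub_smul, one_smul]; abel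
      rw [heq]
      exact hSconv hγ hγ' (by linarith [hα.2]) hα.1 (by ring)
    -- gradient of H
    have hfd : fderiv ℝ H γ = fderiv ℝ φ γ - fderiv ℝ h γ := by
      rw [hH]; exact fderiv_sub (hφdiff γ) (hhdiff γ)
    have hgradH : gradient H γ = gradient φ γ - gradient h γ := by
      show (InnerProductSpace.toDual ℝ V).symm (fderiv ℝ H γ)
        = (InnerProductSpace.toDual ℝ V).symm (fderiv ℝ φ γ)
          - (InnerProductSpace.toDual ℝ V).symm (fderiv ℝ h γ)
      rw [hfd, map_sub]
    -- descent lemma for φ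
    have hdφ := descent_lemma hφdiff hφlip γ γb
    -- strong convexity of h
    have hnsqd : Differentiable ℝ (fun x : V => σ / 2 * ‖x‖ ^ 2) :=
      (((contDiff_norm_sq (𝕜 := ℝ) (E := V) (n := 1)).differentiable
        one_ne_zero)).const_mul (σ / 2)
    have hcd : Differentiable ℝ (fun x : V => h x - σ / 2 * ‖x‖ ^ 2) :=
      hhdiff.sub hnsqd
    have htang := convex_tangent_le hhsc hcd hγ hγbS
    have hfc : fderiv ℝ (fun x : V => h x - σ / 2 * ‖x‖ ^ 2) γ (γb - γ)
        = fderiv ℝ h γ (γb - γ) - σ / 2 * (2 * ⟪γ, γb - γ⟫) := by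
      rw [fderiv_fun_sub (hhdiff γ) (hnsqd γ)]
      simp only [ContinuousLinearMap.sub_apply]
      congr 1
      rw [fderiv_const_mul (((contDiff_norm_sq (𝕜 := ℝ) (E := V)
        (n := 1)).differentiable one_ne_zero) γ) (σ / 2)]
      simp only [ContinuousLinearMap.smul_apply, smul_eq_mul]
      rw [fderiv_normsq_apply]
    rw [hfc] at htang
    have hstrong : h γb - h γ - fderiv ℝ h γ (γb - γ) ≥ σ / 2 * ‖γb - γ‖ ^ 2 := by
      have hns : ‖γb - γ‖ ^ 2 = ‖γb‖ ^ 2 - 2 * ⟪γb, γ⟫ + ‖γ‖ ^ 2 :=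
        norm_sub_sq_real γb γ
      have hir : (⟪γ, γb - γ⟫ : ℝ) = ⟪γ, γb⟫ - ‖γ‖ ^ 2 := by
        rw [inner_sub_right, real_inner_self_eq_norm_sq]
      have hcomm : (⟪γb, γ⟫ : ℝ) = ⟪γ, γb⟫ := real_inner_comm _ _
      rw [hns, hcomm]
      rw [hir] at htang
      linarith
    -- assemble
    have hinnφ : fderiv ℝ φ γ (γb - γ) = ⟪gradient φ γ, γb - γ⟫ :=
      fderiv_eq_inner_gradient φ γ _
    have hinnh : fderiv ℝ h γ (γb - γ) = ⟪gradient h γ, γb - γ⟫ :=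
      fderiv_eq_inner_gradient h γ _
    have hinnH : (⟪γb - γ, gradient H γ⟫ : ℝ)
        = ⟪gradient φ γ, γb - γ⟫ - ⟪gradient h γ, γb - γ⟫ := by
      rw [hgradH, inner_sub_right, real_inner_comm (γb - γ),
        real_inner_comm (γb - γ)]
    have hHval : H γb - H γ = (φ γb - φ γ) - (h γb - h γ) := by
      rw [hH]; ring
    have hnorm : ‖γb - γ‖ ^ 2 = α ^ 2 * ‖γ' - γ‖ ^ 2 := by
      rw [hsub, norm_smul, Real.norm_eq_abs, abs_of_nonneg hα.1, mul_pow]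
    rw [hinnh] at hstrong
    nlinarith [hdφ, hstrong]
  refine ⟨key, ?_⟩
  intro γ hγ γ' hγ' α hα
  have hα2 : (0 : ℝ) < α ^ 2 := pow_pos hα.1 2
  have h1 := key γ hγ γ' hγ' α ⟨le_of_lt hα.1, hα.2⟩
  have hdiam : ‖γ' - γ‖ ≤ Metric.diam S := by
    rw [← dist_eq_norm]
    exact Metric.dist_le_diam_of_mem hSbdd hγ' hγ
  have hsq : ‖γ' - γ‖ ^ 2 ≤ Metric.diam S ^ 2 :=
    pow_le_pow_left₀ (norm_nonneg _) hdiam 2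
  have hLσ : (0 : ℝ) ≤ L - σ := by linarith
  calc 2 / α ^ 2 * (H (γ + α • (γ' - γ)) - H γ
        - ⟪γ + α • (γ' - γ) - γ, gradient H γ⟫)
      ≤ 2 / α ^ 2 * (α ^ 2 / 2 * (L - σ) * ‖γ' - γ‖ ^ 2) := by
        exact mul_le_mul_of_nonneg_left h1 (div_pos two_pos hα2).le
    _ = (L - σ) * ‖γ' - γ‖ ^ 2 := by field_simp [hα.1.ne']
    _ ≤ (L - σ) * Metric.diam S ^ 2 := mul_le_mul_of_nonneg_left hsq hLσ
end

section
/- Let V be a finite-dimensional real inner product space and P ⊆ V a nonempty compact convex set. Let H : V → ℝ be differentiable, and suppose H has curvature constant at most C > 0 on P, i.e., for all γ, γ̂ ∈ P and α ∈ [0,1], with γ̄ = γ + α(γ̂ − γ), H(γ̄) − H(γ) − ⟨γ̄ − γ, ∇H(γ)⟩ ≤ (α²/2) C ‖γ̂ − γ‖² ≤ (α²/2) C · diam(P)²/diam(P)² · diam(P)² (that is, the generalized curvature constant of H over P is at most C). Define a sequence (γ^i) in P by choosing any γ^0 ∈ P and, for each i ≥ 0, letting s_i ∈ P attain the maximum δ_i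 = max_{s ∈ P} ⟨γ^i − s, ∇H(γ^i)⟩ and setting γ^{i+1} = γ^i + α_i (s_i − γ^i) with step size α_i = min{δ_i/C, 1}. Let h₀ = H(γ^0) − min_{γ ∈ P} H(γ). Then for every k ≥ 0, min_{0 ≤ i ≤ k} δ_i ≤ max{2h₀, C} / √(k+1). -/
/-!
The step size `α = min (δ/C) 1` maximises the lower bound `α δ - α² C / 2` that the curvature
bound gives for the decrease of `H` along the Frank–Wolfe direction, so every step decreases `H`
by at least `min (δ²/(2C)) (δ/2)`. Summing over `k + 1` steps, the total decrease is at most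
`h₀`, so the smallest gap `δ` satisfies `(k + 1) min (δ²/(2C)) (δ/2) ≤ h₀`, which in either branch
of the minimum gives `δ √(k + 1) ≤ max (2h₀) C`.
-/

open RealInnerProductSpace Finset

noncomputable def frankWolfeDecrease (C δ : ℝ) : ℝ := min (δ ^ 2 / (2 * C)) (δ / 2)

lemma frankWolfeDecrease_nonneg {C δ : ℝ} (hC : 0 < C) (hδ : 0 ≤ δ) :
    0 ≤ frankWolfeDecrease C δ :=
  le_min (by positivity) (by positivity)

lemma frankWolfeDecrease_le_step {C δ : ℝ} (hC : 0 < C) :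
    frankWolfeDecrease C δ ≤ min (δ / C) 1 * δ - min (δ / C) 1 ^ 2 / 2 * C := by
  rcases le_total δ C with hδC | hCδ
  · have hα : min (δ / C) 1 = δ / C := min_eq_left ((div_le_one hC).2 hδC)
    calc frankWolfeDecrease C δ ≤ δ ^ 2 / (2 * C) := min_le_left _ _
      _ = δ / C * δ - (δ / C) ^ 2 / 2 * C := by field_simp; ring
      _ = _ := by rw [hα]
  · have hα : min (δ / C) 1 = 1 := min_eq_right ((le_div_iff₀ hC).2 (by linarith))
    calc frankWolfeDecrease C δ ≤ δ / 2 := min_le_right _ _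
      _ ≤ 1 * δ - 1 ^ 2 / 2 * C := by linarith
      _ = _ := by rw [hα]

lemma le_div_sqrt_of_mul_frankWolfeDecrease_le {C δ h n : ℝ} (hC : 0 < C) (hδ : 0 ≤ δ)
    (hn : 1 ≤ n) (hdec : n * frankWolfeDecrease C δ ≤ h) :
    δ ≤ max (2 * h) C / Real.sqrt n := by
  have hφ := frankWolfeDecrease_nonneg hC hδ
  have hh : 0 ≤ h := le_trans (by positivity) hdec
  have h2M : 2 * h ≤ max (2 * h) C := le_max_left _ _
  have hCM : C ≤ max (2 * h) C := le_max_right _ _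
  have hsqrt : Real.sqrt n ^ 2 = n := Real.sq_sqrt (by linarith)
  rw [le_div_iff₀ (Real.sqrt_pos.2 (by linarith))]
  rcases le_total δ C with hδC | hCδ
  · have hφδ : frankWolfeDecrease C δ = δ ^ 2 / (2 * C) := by
      refine min_eq_left ((div_le_div_iff₀ (by positivity) two_pos).2 ?_)
      nlinarith
    rw [hφδ, mul_div_assoc', div_le_iff₀ (by positivity)] at hdec
    refine (pow_le_pow_iff_left₀ (by positivity) (by positivity) two_ne_zero).1 ?_
    rw [mul_pow, hsqrt]
    nlinarith
  · have hφδ : frankWolfeDecrease C δ = δ / 2 := by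
      refine min_eq_right ((div_le_div_iff₀ two_pos (by positivity)).2 ?_)
      nlinarith
    have hsqrt_le : Real.sqrt n ≤ n := (Real.sqrt_le_left (by linarith)).2 (by nlinarith)
    rw [hφδ] at hdec
    nlinarith

section FrankWolfe

variable {V : Type*} [NormedAddCommGroup V] [InnerProductSpace ℝ V]

lemma mul_inner_sub_le_of_curvature {H : V → ℝ} {g x y : V} {α C : ℝ}
    (hcurv : H (x + α • (y - x)) - H x - ⟪x + α • (y - x) - x, g⟫ ≤ α ^ 2 / 2 * C) :
    α * ⟪x - y, g⟫ - α ^ 2 / 2 * C ≤ H x - H (x + α • (y - x)) := by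
  have hdir : ⟪x + α • (y - x) - x, g⟫ = -(α * ⟪x - y, g⟫) := by
    rw [add_sub_cancel_left, real_inner_smul_left, ← neg_sub x y, inner_neg_left, mul_neg]
  linarith

lemma frankWolfe_gap_nonneg {P : Set V} {x g : V} {δ : ℝ} (hx : x ∈ P)
    (hmax : ∀ t ∈ P, ⟪x - t, g⟫ ≤ δ) : 0 ≤ δ := by
  simpa using hmax x hx

variable {P : Set V} {C : ℝ} {γ s g : ℕ → V} {δ : ℕ → ℝ}

lemma frankWolfe_iterate_mem (hP : Convex ℝ P) (hC : 0 < C) (hγ0 : γ 0 ∈ P)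
    (hs : ∀ i, s i ∈ P) (hmax : ∀ i, ∀ t ∈ P, ⟪γ i - t, g i⟫ ≤ δ i)
    (hiter : ∀ i, γ (i + 1) = γ i + min (δ i / C) 1 • (s i - γ i)) (i : ℕ) : γ i ∈ P := by
  induction i with
  | zero => exact hγ0
  | succ i ih =>
    have hδ := frankWolfe_gap_nonneg ih (hmax i)
    rw [hiter i]
    exact hP.add_smul_sub_mem ih (hs i) ⟨le_min (by positivity) zero_le_one, min_le_right _ _⟩

lemma frankWolfe_sum_decrease_le [CompleteSpace V] {H : V → ℝ} (hP : Convex ℝ P) (hC : 0 < C)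
    (hcurv : ∀ x ∈ P, ∀ y ∈ P, ∀ α ∈ Set.Icc (0 : ℝ) 1,
      H (x + α • (y - x)) - H x - ⟪x + α • (y - x) - x, gradient H x⟫ ≤ α ^ 2 / 2 * C)
    (hγ0 : γ 0 ∈ P) (hs : ∀ i, s i ∈ P) (hδ : ∀ i, δ i = ⟪γ i - s i, gradient H (γ i)⟫)
    (hmax : ∀ i, ∀ t ∈ P, ⟪γ i - t, gradient H (γ i)⟫ ≤ δ i)
    (hiter : ∀ i, γ (i + 1) = γ i + min (δ i / C) 1 • (s i - γ i)) (n : ℕ) :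
    ∑ i ∈ range n, frankWolfeDecrease C (δ i) ≤ H (γ 0) - H (γ n) := by
  have hmem := frankWolfe_iterate_mem hP hC hγ0 hs hmax hiter
  calc ∑ i ∈ range n, frankWolfeDecrease C (δ i) ≤ ∑ i ∈ range n, (H (γ i) - H (γ (i + 1))) := by
        refine sum_le_sum fun i _ ↦ ?_
        have hδ0 := frankWolfe_gap_nonneg (hmem i) (hmax i)
        have hα : min (δ i / C) 1 ∈ Set.Icc (0 : ℝ) 1 :=
          ⟨le_min (by positivity) zero_le_one, min_le_right _ _⟩
        have hstep := mul_inner_sub_le_of_curvature (hcurv _ (hmem i) _ (hs i) _ hα)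
        rw [← hδ i, ← hiter i] at hstep
        exact (frankWolfeDecrease_le_step hC).trans hstep
    _ = H (γ 0) - H (γ n) := sum_range_sub' _ _

end FrankWolfe

theorem scg_convergence_general {V : Type*} [NormedAddCommGroup V]
    [InnerProductSpace ℝ V] [FiniteDimensional ℝ V]
    (P : Set V) (hPcpt : IsCompact P) (hPconv : Convex ℝ P)
    (H : V → ℝ) (hH : Differentiable ℝ H) (C : ℝ) (hC : 0 < C)
    (hcurv : ∀ γ ∈ P, ∀ γ' ∈ P, ∀ α ∈ Set.Icc (0 : ℝ) 1,
      H (γ + α • (γ' - γ)) - H γ - ⟪γ + α • (γ' - γ) - γ, gradient H γ⟫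
        ≤ α ^ 2 / 2 * C)
    (γ : ℕ → V) (s : ℕ → V) (δ : ℕ → ℝ)
    (hγ0 : γ 0 ∈ P) (hs : ∀ i, s i ∈ P)
    (hδ : ∀ i, δ i = ⟪γ i - s i, gradient H (γ i)⟫)
    (hmax : ∀ i, ∀ t ∈ P, ⟪γ i - t, gradient H (γ i)⟫ ≤ δ i)
    (hiter : ∀ i, γ (i + 1) = γ i + min (δ i / C) 1 • (s i - γ i)) :
    ∀ k : ℕ, ∃ i ≤ k,
      δ i ≤ max (2 * (H (γ 0) - sInf (H '' P))) C / Real.sqrt (k + 1) := by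
  intro k
  have hmem := frankWolfe_iterate_mem hPconv hC hγ0 hs hmax hiter
  have hbdd : BddBelow (H '' P) := (hPcpt.image hH.continuous).bddBelow
  obtain ⟨i, hi, hmin⟩ :=
    exists_min_image (range (k + 1)) (fun i ↦ frankWolfeDecrease C (δ i)) ⟨0, by simp⟩
  refine ⟨i, Nat.lt_succ_iff.mp (mem_range.mp hi),
    le_div_sqrt_of_mul_frankWolfeDecrease_le hC (frankWolfe_gap_nonneg (hmem i) (hmax i))
      (le_add_of_nonneg_left k.cast_nonneg) ?_⟩
  calc ((k : ℝ) + 1) * frankWolfeDecrease C (δ i)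
      ≤ ∑ j ∈ range (k + 1), frankWolfeDecrease C (δ j) := by
        simpa using card_nsmul_le_sum _ _ _ hmin
    _ ≤ H (γ 0) - H (γ (k + 1)) :=
        frankWolfe_sum_decrease_le hPconv hC hcurv hγ0 hs hδ hmax hiter _
    _ ≤ H (γ 0) - sInf (H '' P) := by
        gcongr
        exact csInf_le hbdd (Set.mem_image_of_mem H (hmem _))

/-- Theorem 1 (Convergence of SCG / nonconvex Frank–Wolfe): if `H` is
differentiable with generalized curvature constant at most `C > 0` over the
nonempty compact convex set `P`, and the iterates follow
`γ^{i+1} = γ^i + α_i (s_i − γ^i)` where `s_i` attains the Frank–Wolfe gap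
`δ_i = max_{s ∈ P} ⟪γ^i − s, ∇H(γ^i)⟫` and `α_i = min{δ_i/C, 1}`, then with
`h₀ = H(γ^0) − min_P H`, for every `k ≥ 0`,
`min_{0 ≤ i ≤ k} δ_i ≤ max{2h₀, C}/√(k+1)`. -/
theorem scg_convergence {V : Type*} [NormedAddCommGroup V]
    [InnerProductSpace ℝ V] [FiniteDimensional ℝ V]
    (P : Set V) (hPne : P.Nonempty) (hPcpt : IsCompact P) (hPconv : Convex ℝ P)
    (H : V → ℝ) (hH : Differentiable ℝ H) (C : ℝ) (hC : 0 < C)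
    (hcurv : ∀ γ ∈ P, ∀ γ' ∈ P, ∀ α ∈ Set.Icc (0 : ℝ) 1,
      H (γ + α • (γ' - γ)) - H γ - ⟪γ + α • (γ' - γ) - γ, gradient H γ⟫
        ≤ α ^ 2 / 2 * C)
    (γ : ℕ → V) (s : ℕ → V) (δ : ℕ → ℝ)
    (hγ0 : γ 0 ∈ P) (hs : ∀ i, s i ∈ P)
    (hδ : ∀ i, δ i = ⟪γ i - s i, gradient H (γ i)⟫)
    (hmax : ∀ i, ∀ t ∈ P, ⟪γ i - t, gradient H (γ i)⟫ ≤ δ i)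
    (hiter : ∀ i, γ (i + 1) = γ i + min (δ i / C) 1 • (s i - γ i)) :
    ∀ k : ℕ, ∃ i ≤ k,
      δ i ≤ max (2 * (H (γ 0) - sInf (H '' P))) C / Real.sqrt (k + 1) :=
  scg_convergence_general P hPcpt hPconv H hH C hC hcurv γ s δ hγ0 hs hδ hmax hiter
end

section
/- Under the hypotheses of the nonconvex Frank–Wolfe convergence theorem (H differentiable on a nonempty compact convex set P ⊆ V with curvature constant at most C > 0, iterates γ^{i+1} = γ^i + α_i(s_i − γ^i) with s_i attaining δ_i = max_{s ∈ P} ⟨γ^i − s, ∇H(γ^i)⟩ and α_i = min{δ_i/C, 1}, and h₀ = H(γ^0) − min_P H): for every ε > 0, if k + 1 ≥ (max{2h₀, C}/ε)², then min_{0 ≤ i ≤ k} δ_i ≤ ε. In particular, the minimal suboptimality gap after k iterations is O(1/√k), and an approximate stationary point with suboptimality gap smaller than ε is found within O(1/ε²) iterations. -/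
open RealInnerProductSpace

/-- Corollary 1: under the hypotheses of the nonconvex Frank–Wolfe convergence
theorem, for every `ε > 0`, if `k + 1 ≥ (max{2h₀, C}/ε)²` then
`min_{0 ≤ i ≤ k} δ_i ≤ ε`; i.e. the minimal suboptimality gap is `O(1/√k)` and
an `ε`-approximate stationary point is found within `O(1/ε²)` iterations. -/
theorem scg_iteration_complexity {V : Type*} [NormedAddCommGroup V]
    [InnerProductSpace ℝ V] [FiniteDimensional ℝ V]
    (P : Set V) (hPne : P.Nonempty) (hPcpt : IsCompact P) (hPconv : Convex ℝ P)
    (H : V → ℝ) (hH : Differentiable ℝ H) (C : ℝ) (hC : 0 < C)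
    (hcurv : ∀ γ ∈ P, ∀ γ' ∈ P, ∀ α ∈ Set.Icc (0 : ℝ) 1,
      H (γ + α • (γ' - γ)) - H γ - ⟪γ + α • (γ' - γ) - γ, gradient H γ⟫
        ≤ α ^ 2 / 2 * C)
    (γ : ℕ → V) (s : ℕ → V) (δ : ℕ → ℝ)
    (hγ0 : γ 0 ∈ P) (hs : ∀ i, s i ∈ P)
    (hδ : ∀ i, δ i = ⟪γ i - s i, gradient H (γ i)⟫)
    (hmax : ∀ i, ∀ t ∈ P, ⟪γ i - t, gradient H (γ i)⟫ ≤ δ i)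
    (hiter : ∀ i, γ (i + 1) = γ i + min (δ i / C) 1 • (s i - γ i)) :
    ∀ ε > (0 : ℝ), ∀ k : ℕ,
      (max (2 * (H (γ 0) - sInf (H '' P))) C / ε) ^ 2 ≤ (k : ℝ) + 1 →
      ∃ i ≤ k, δ i ≤ ε := by
  intro ε hε k hk
  -- membership and nonnegativity of δ
  have hmem : ∀ i, γ i ∈ P := by
    intro i
    induction i with
    | zero => exact hγ0
    | succ n ih =>
      have hδn : 0 ≤ δ n := by simpa using hmax n (γ n) ih
      rw [hiter n]
      exact hPconv.add_smul_sub_mem ih (hs n)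
        ⟨le_min (div_nonneg hδn hC.le) zero_le_one, min_le_right _ _⟩
  have hδnn : ∀ i, 0 ≤ δ i := fun i => by simpa using hmax i (γ i) (hmem i)
  -- per-step decrease
  have hdec : ∀ i, H (γ (i + 1)) ≤ H (γ i) - δ i * min (δ i) C / (2 * C) := by
    intro i
    set α := min (δ i / C) 1 with hα
    have hα0 : 0 ≤ α := le_min (div_nonneg (hδnn i) hC.le) zero_le_one
    have hα1 : α ≤ 1 := min_le_right _ _
    have hc := hcurv (γ i) (hmem i) (s i) (hs i) α ⟨hα0, hα1⟩
    have hinner : ⟪γ i + α • (s i - γ i) - γ i, gradient H (γ i)⟫ = -(α * δ i) := by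
      rw [add_sub_cancel_left, real_inner_smul_left, hδ i]
      simp [inner_sub_left]
      ring
    rw [hinner, ← hiter i] at hc
    have harith : δ i * min (δ i) C / (2 * C) ≤ α * δ i - α ^ 2 / 2 * C := by
      rcases le_or_gt (δ i) C with h | h
      · have hα' : α = δ i / C := min_eq_left (by rw [div_le_one hC]; exact h)
        rw [hα', min_eq_left h]
        have heq : (δ i / C) * δ i - (δ i / C) ^ 2 / 2 * C = δ i * δ i / (2 * C) := by
          field_simp; ring
        rw [heq]
      · have hα' : α = 1 := min_eq_right (by rw [le_div_iff₀ hC]; linarith)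
        rw [hα', min_eq_right h.le]
        have h2 : δ i * C / (2 * C) = δ i / 2 := by field_simp
        rw [h2]
        nlinarith
    linarith
  -- lower bound on H
  have hbdd : BddBelow (H '' P) := (hPcpt.image hH.continuous).bddBelow
  have hinf : ∀ i, sInf (H '' P) ≤ H (γ i) := fun i =>
    csInf_le hbdd ⟨γ i, hmem i, rfl⟩
  set h0 := H (γ 0) - sInf (H '' P) with hh0
  have hh0nn : 0 ≤ h0 := by have := hinf 0; linarith
  set M := max (2 * h0) C with hM
  have hMC : C ≤ M := le_max_right _ _
  have hMh : 2 * h0 ≤ M := le_max_left _ _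
  have hM0 : 0 < M := lt_of_lt_of_le hC hMC
  by_contra hcon
  push_neg at hcon
  -- telescoping sum and strict lower bound
  have hsum : (k + 1 : ℝ) * (ε * min ε C / (2 * C)) < h0 := by
    have h1 : ∀ i ∈ Finset.range (k + 1),
        ε * min ε C / (2 * C) < H (γ i) - H (γ (i + 1)) := by
      intro i hi
      have hεδ : ε < δ i := hcon i (Nat.lt_succ_iff.mp (Finset.mem_range.mp hi))
      have hmm : ε * min ε C < δ i * min (δ i) C := by
        have h1 : min ε C ≤ min (δ i) C := min_le_min hεδ.le le_rfl
        have h2 : 0 < min ε C := lt_min hε hC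
        nlinarith
      have h3 : ε * min ε C / (2 * C) < δ i * min (δ i) C / (2 * C) :=
        (div_lt_div_iff_of_pos_right (by linarith)).mpr hmm
      linarith [hdec i]
    have h2 : (∑ i ∈ Finset.range (k + 1), (ε * min ε C / (2 * C))) <
        ∑ i ∈ Finset.range (k + 1), (H (γ i) - H (γ (i + 1))) :=
      Finset.sum_lt_sum_of_nonempty (by simp) h1
    rw [Finset.sum_range_sub' (fun i => H (γ i)) (k + 1)] at h2
    simp only [Finset.sum_const, Finset.card_range, nsmul_eq_mul] at h2
    have := hinf (k + 1)
    push_cast at h2 ⊢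
    linarith
  -- derive contradiction
  have hk1 : (1 : ℝ) ≤ (k : ℝ) + 1 := by
    have : (0:ℝ) ≤ (k:ℝ) := Nat.cast_nonneg k
    linarith
  have hkM : (M / ε) ^ 2 ≤ (k : ℝ) + 1 := hk
  have hfinal : h0 ≤ (k + 1 : ℝ) * (ε * min ε C / (2 * C)) := by
    rcases le_or_gt ε C with h | h
    · rw [min_eq_left h]
      have : M ^ 2 / ε ^ 2 ≤ (k : ℝ) + 1 := by rw [← div_pow]; exact hkM
      have hM2 : M ^ 2 ≤ ((k : ℝ) + 1) * ε ^ 2 := by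
        have h4 : M ^ 2 / ε ^ 2 ≤ (k : ℝ) + 1 := by rw [← div_pow]; exact hkM
        rw [div_le_iff₀ (by positivity : (0:ℝ) < ε ^ 2)] at h4
        linarith
      have key : h0 * (2 * C) ≤ ((k : ℝ) + 1) * ε ^ 2 := by nlinarith
      have : h0 ≤ ((k : ℝ) + 1) * ε ^ 2 / (2 * C) := by
        rw [le_div_iff₀ (by linarith : (0:ℝ) < 2 * C)]; exact key
      calc h0 ≤ ((k : ℝ) + 1) * ε ^ 2 / (2 * C) := this
        _ = ((k : ℝ) + 1) * (ε * ε / (2 * C)) := by ring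
    · rw [min_eq_right h.le]
      have h2 : ((k : ℝ) + 1) * (ε * C / (2 * C)) = ((k : ℝ) + 1) * ε / 2 := by
        field_simp
      rw [h2]
      have hMε : M ≤ ((k : ℝ) + 1) * ε := by
        rcases le_or_gt M ε with h' | h'
        · nlinarith
        · have : M ^ 2 / ε ^ 2 ≤ (k : ℝ) + 1 := by rw [← div_pow]; exact hkM
          have h4 : M ^ 2 ≤ ((k : ℝ) + 1) * ε ^ 2 := by
            rw [← div_le_iff₀ (by positivity : (0:ℝ) < ε ^ 2)]; exact this
          nlinarith
      linarith
  linarith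
end
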